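/- arXiv:math/0609427 — 6 statements merged into one kernel-verified Lean document; each statement's English description precedes it below -/
import Mathlib

section
/- The weighted Poisson bracket of H₀ and L vanishes identically on ℝ^{2n}_#: {H₀, L} = 0. -/
/-- Partial derivative of f : (Fin n → ℂ) → ℝ with respect to x_k = Re z_k. -/
noncomputable def pX (n : ℕ) (f : (Fin n → ℂ) → ℝ) (k : Fin n) (z : Fin n → ℂ) : ℝ :=
  deriv (fun s : ℝ => f (Function.update z k ⟨s, (z k).im⟩)) ((z k).re)

/-- Partial derivative of f : (Fin n → ℂ) → ℝ with respect to y_k = Im z_k. -/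
noncomputable def pY (n : ℕ) (f : (Fin n → ℂ) → ℝ) (k : Fin n) (z : Fin n → ℂ) : ℝ :=
  deriv (fun s : ℝ => f (Function.update z k ⟨(z k).re, s⟩)) ((z k).im)

/-- The weighted Poisson bracket
{f, g} := Σ_k κ_k⁻¹ (∂f/∂y_k ∂g/∂x_k − ∂f/∂x_k ∂g/∂y_k). -/
noncomputable def pbracket (n : ℕ) (κ : Fin n → ℝ) (f g : (Fin n → ℂ) → ℝ)
    (z : Fin n → ℂ) : ℝ :=
  ∑ k, (κ k)⁻¹ * (pY n f k z * pX n g k z - pX n f k z * pY n g k z)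

section aux

lemma hasDerivAt_log_complexAbs {f : ℝ → ℂ} {f' : ℂ} {t : ℝ}
    (hf : HasDerivAt f f' t) (h0 : f t ≠ 0) :
    HasDerivAt (fun s => Real.log ‖f s‖)
      (((f t).re * f'.re + (f t).im * f'.im) / Complex.normSq (f t)) t := by
  have hre : HasDerivAt (fun s => (f s).re) f'.re t :=
    Complex.reCLM.hasFDerivAt.comp_hasDerivAt t hf
  have him : HasDerivAt (fun s => (f s).im) f'.im t :=
    Complex.imCLM.hasFDerivAt.comp_hasDerivAt t hf
  have hnsq : HasDerivAt (fun s => Complex.normSq (f s))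
      (f'.re * (f t).re + (f t).re * f'.re + (f'.im * (f t).im + (f t).im * f'.im)) t := by
    simpa [Complex.normSq_apply] using (hre.fun_mul hre).fun_add (him.fun_mul him)
  have hne : Complex.normSq (f t) ≠ 0 := by simpa [Complex.normSq_eq_zero] using h0
  have hlog := (Real.hasDerivAt_log hne).comp t hnsq
  have heq : (fun s => Real.log ‖f s‖)
      = fun s => Real.log (Complex.normSq (f s)) / 2 := by
    funext s; rw [Complex.norm_def, Real.log_sqrt (Complex.normSq_nonneg _)]
  rw [heq]
  refine (hlog.div_const 2).congr_deriv ?_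
  field_simp [hne]
  ring

lemma upd_eta {n : ℕ} (z : Fin n → ℂ) (k : Fin n) :
    Function.update z k (⟨(z k).re, (z k).im⟩ : ℂ) = z := by
  rw [show (⟨(z k).re, (z k).im⟩ : ℂ) = z k from Complex.ext rfl rfl, Function.update_eq_self]

lemma comp_deriv_x {n : ℕ} (z : Fin n → ℂ) (k i : Fin n) :
    HasDerivAt (fun s : ℝ => Function.update z k (⟨s, (z k).im⟩ : ℂ) i)
      (if k = i then 1 else 0) ((z k).re) := by
  rcases eq_or_ne k i with h | h
  · subst h
    simp only [Function.update_self, if_pos rfl]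
    have : (fun s : ℝ => (⟨s, (z k).im⟩ : ℂ))
        = fun s : ℝ => (s : ℂ) + ((z k).im : ℂ) * Complex.I := by
      funext s; apply Complex.ext <;> simp
    rw [this]
    simpa using (Complex.ofRealCLM.hasDerivAt (x := (z k).re)).add_const
      (((z k).im : ℂ) * Complex.I)
  · simp only [Function.update_of_ne (Ne.symm h), if_neg h]
    exact hasDerivAt_const _ _

lemma comp_deriv_y {n : ℕ} (z : Fin n → ℂ) (k i : Fin n) :
    HasDerivAt (fun s : ℝ => Function.update z k (⟨(z k).re, s⟩ : ℂ) i)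
      (if k = i then Complex.I else 0) ((z k).im) := by
  rcases eq_or_ne k i with h | h
  · subst h
    simp only [Function.update_self, if_pos rfl]
    have : (fun s : ℝ => (⟨(z k).re, s⟩ : ℂ))
        = fun s : ℝ => (s : ℂ) * Complex.I + ((z k).re : ℂ) := by
      funext s; apply Complex.ext <;> simp
    rw [this]
    simpa using ((Complex.ofRealCLM.hasDerivAt (x := (z k).im)).mul_const Complex.I).add_const
      (((z k).re : ℂ))
  · simp only [Function.update_of_ne (Ne.symm h), if_neg h]
    exact hasDerivAt_const _ _

lemma pair_deriv_x {n : ℕ} (z : Fin n → ℂ) (k j m : Fin n) (hjm : j ≠ m)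
    (h0 : z j - z m ≠ 0) :
    HasDerivAt (fun s : ℝ => Real.log (‖
        (Function.update z k (⟨s, (z k).im⟩ : ℂ) j - Function.update z k (⟨s, (z k).im⟩ : ℂ) m)‖))
      ((if k = j then (z j - z m).re else if k = m then -(z j - z m).re else 0)
        / Complex.normSq (z j - z m)) ((z k).re) := by
  have hpath := (comp_deriv_x z k j).fun_sub (comp_deriv_x z k m)
  have H := hasDerivAt_log_complexAbs hpath (by rw [upd_eta z k]; exact h0)
  rw [upd_eta z k] at H
  convert H using 2
  rcases eq_or_ne k j with h1 | h1 <;> rcases eq_or_ne k m with h2 | h2 <;>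
    simp_all

lemma pair_deriv_y {n : ℕ} (z : Fin n → ℂ) (k j m : Fin n) (hjm : j ≠ m)
    (h0 : z j - z m ≠ 0) :
    HasDerivAt (fun s : ℝ => Real.log (‖
        (Function.update z k (⟨(z k).re, s⟩ : ℂ) j - Function.update z k (⟨(z k).re, s⟩ : ℂ) m)‖))
      ((if k = j then (z j - z m).im else if k = m then -(z j - z m).im else 0)
        / Complex.normSq (z j - z m)) ((z k).im) := by
  have hpath := (comp_deriv_y z k j).fun_sub (comp_deriv_y z k m)
  have H := hasDerivAt_log_complexAbs hpath (by rw [upd_eta z k]; exact h0)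
  rw [upd_eta z k] at H
  convert H using 2
  rcases eq_or_ne k j with h1 | h1 <;> rcases eq_or_ne k m with h2 | h2 <;>
    simp_all

lemma upd_im {n : ℕ} (z : Fin n → ℂ) (k m : Fin n) (s : ℝ) :
    (Function.update z k (⟨s, (z k).im⟩ : ℂ) m).im = (z m).im := by
  rcases eq_or_ne m k with h | h
  · subst h; simp
  · simp [h]

lemma upd_re' {n : ℕ} (z : Fin n → ℂ) (k m : Fin n) (s : ℝ) :
    (Function.update z k (⟨(z k).re, s⟩ : ℂ) m).re = (z m).re := by
  rcases eq_or_ne m k with h | h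
  · subst h; simp
  · simp [h]

lemma upd_re {n : ℕ} (z : Fin n → ℂ) (k m : Fin n) (s : ℝ) :
    (Function.update z k (⟨s, (z k).im⟩ : ℂ) m).re = if m = k then s else (z m).re := by
  rcases eq_or_ne m k with h | h
  · subst h; simp
  · simp [h]

lemma upd_im' {n : ℕ} (z : Fin n → ℂ) (k m : Fin n) (s : ℝ) :
    (Function.update z k (⟨(z k).re, s⟩ : ℂ) m).im = if m = k then s else (z m).im := by
  rcases eq_or_ne m k with h | h
  · subst h; simp
  · simp [h]

lemma sum_deriv {n : ℕ} (κ : Fin n → ℝ) (c : Fin n → ℝ) (k : Fin n) (t : ℝ) :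
    HasDerivAt (fun s : ℝ => ∑ m, κ m * (if m = k then s else c m)) (κ k) t := by
  have h : ∀ m ∈ Finset.univ, HasDerivAt
      (fun s : ℝ => κ m * (if m = k then s else c m))
      (if m = k then κ m else 0) t := by
    intro m _
    rcases eq_or_ne m k with h | h
    · subst h
      simpa using (hasDerivAt_id t).const_mul (κ m)
    · simp only [if_neg h]
      exact hasDerivAt_const _ _
  simpa [Finset.sum_ite_eq'] using HasDerivAt.fun_sum h

lemma sum_if_eval {n : ℕ} (κ : Fin n → ℝ) (c : Fin n → ℝ) (k : Fin n) :
    ∑ m, κ m * (if m = k then c k else c m) = ∑ m, κ m * c m := by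
  refine Finset.sum_congr rfl fun m _ => ?_
  split_ifs with h
  · subst h; rfl
  · rfl

lemma pXL {n : ℕ} (κ : Fin n → ℝ) (z : Fin n → ℂ) (k : Fin n) :
    pX n (fun w => (∑ m, κ m * (w m).re) ^ 2 + (∑ m, κ m * (w m).im) ^ 2) k z
      = 2 * (∑ m, κ m * (z m).re) * κ k := by
  have h1 : (fun s : ℝ => (∑ m, κ m * ((Function.update z k (⟨s, (z k).im⟩ : ℂ)) m).re) ^ 2
      + (∑ m, κ m * ((Function.update z k (⟨s, (z k).im⟩ : ℂ)) m).im) ^ 2)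
      = fun s : ℝ => (∑ m, κ m * (if m = k then s else (z m).re)) ^ 2
      + (∑ m, κ m * (z m).im) ^ 2 := by
    funext s; simp only [upd_re, upd_im]
  have key : HasDerivAt (fun s : ℝ =>
      (∑ m, κ m * ((Function.update z k (⟨s, (z k).im⟩ : ℂ)) m).re) ^ 2
      + (∑ m, κ m * ((Function.update z k (⟨s, (z k).im⟩ : ℂ)) m).im) ^ 2)
      (2 * (∑ m, κ m * (z m).re) * κ k) ((z k).re) := by
    rw [h1]
    have h2 := ((sum_deriv κ (fun m => (z m).re) k ((z k).re)).fun_pow 2).add_const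
      ((∑ m, κ m * (z m).im) ^ 2)
    refine h2.congr_deriv ?_
    rw [sum_if_eval κ (fun m => (z m).re) k]
    norm_num
  exact key.deriv

lemma pYL {n : ℕ} (κ : Fin n → ℝ) (z : Fin n → ℂ) (k : Fin n) :
    pY n (fun w => (∑ m, κ m * (w m).re) ^ 2 + (∑ m, κ m * (w m).im) ^ 2) k z
      = 2 * (∑ m, κ m * (z m).im) * κ k := by
  have h1 : (fun s : ℝ => (∑ m, κ m * ((Function.update z k (⟨(z k).re, s⟩ : ℂ)) m).re) ^ 2
      + (∑ m, κ m * ((Function.update z k (⟨(z k).re, s⟩ : ℂ)) m).im) ^ 2)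
      = fun s : ℝ => (∑ m, κ m * (z m).re) ^ 2
      + (∑ m, κ m * (if m = k then s else (z m).im)) ^ 2 := by
    funext s; simp only [upd_re', upd_im']
  have key : HasDerivAt (fun s : ℝ =>
      (∑ m, κ m * ((Function.update z k (⟨(z k).re, s⟩ : ℂ)) m).re) ^ 2
      + (∑ m, κ m * ((Function.update z k (⟨(z k).re, s⟩ : ℂ)) m).im) ^ 2)
      (2 * (∑ m, κ m * (z m).im) * κ k) ((z k).im) := by
    rw [h1]
    have h2 := (((sum_deriv κ (fun m => (z m).im) k ((z k).im)).fun_pow 2).const_add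
      ((∑ m, κ m * (z m).re) ^ 2))
    refine h2.congr_deriv ?_
    rw [sum_if_eval κ (fun m => (z m).im) k]
    norm_num
  exact key.deriv

lemma sum_if_pair {n : ℕ} {j m : Fin n} (h : j ≠ m) (a b : ℝ) :
    ∑ k, (if k = j then a else if k = m then b else 0) = a + b := by
  have hsplit : ∀ k : Fin n, (if k = j then a else if k = m then b else 0)
      = (if k = j then a else 0) + (if k = m then b else 0) := by
    intro k
    by_cases h1 : k = j <;> by_cases h2 : k = m <;> simp_all
  simp [hsplit, Finset.sum_add_distrib, Finset.sum_ite_eq']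

end aux

/-- {H₀, L} = 0 at every point of ℝ^{2n}_#, where
H₀ = −Σ_{j<k} κ_j κ_k log|z_j − z_k|, J = Σ_k κ_k z_k, and
L = (Re J)² + (Im J)². -/
theorem bracket_H0_L_eq_zero (n : ℕ) (hn : 2 ≤ n) (κ : Fin n → ℝ)
    (hκ : ∀ j, κ j ≠ 0) (z : Fin n → ℂ) (hz : ∀ j k, j ≠ k → z j ≠ z k) :
    pbracket n κ
      (fun w => -∑ p ∈ Finset.univ.filter (fun p : Fin n × Fin n => p.1 < p.2),
        κ p.1 * κ p.2 * Real.log ‖w p.1 - w p.2‖)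
      (fun w => (∑ k, κ k * (w k).re) ^ 2 + (∑ k, κ k * (w k).im) ^ 2) z = 0 := by
  classical
  set P := Finset.univ.filter (fun p : Fin n × Fin n => p.1 < p.2) with hP
  set H₀ : (Fin n → ℂ) → ℝ := fun w => -∑ p ∈ P,
    κ p.1 * κ p.2 * Real.log ‖w p.1 - w p.2‖ with hH
  have hpne : ∀ p ∈ P, p.1 ≠ p.2 ∧ z p.1 - z p.2 ≠ 0 := by
    intro p hp
    have h1 : p.1 < p.2 := (Finset.mem_filter.mp hp).2
    exact ⟨ne_of_lt h1, sub_ne_zero.mpr (hz _ _ (ne_of_lt h1))⟩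
  -- partial derivatives of H₀
  have hHx : ∀ k, pX n H₀ k z = -∑ p ∈ P, κ p.1 * κ p.2 *
      ((if k = p.1 then (z p.1 - z p.2).re else if k = p.2 then -(z p.1 - z p.2).re else 0)
        / Complex.normSq (z p.1 - z p.2)) := by
    intro k
    have key : HasDerivAt (fun s : ℝ => -∑ p ∈ P, κ p.1 * κ p.2 * Real.log (‖
        (Function.update z k (⟨s, (z k).im⟩ : ℂ) p.1
          - Function.update z k (⟨s, (z k).im⟩ : ℂ) p.2)‖))
        (-∑ p ∈ P, κ p.1 * κ p.2 *
          ((if k = p.1 then (z p.1 - z p.2).re else if k = p.2 then -(z p.1 - z p.2).re else 0)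
            / Complex.normSq (z p.1 - z p.2))) ((z k).re) :=
      (HasDerivAt.fun_sum fun p hp =>
        (pair_deriv_x z k p.1 p.2 (hpne p hp).1 (hpne p hp).2).const_mul
          (κ p.1 * κ p.2)).neg
    exact key.deriv
  have hHy : ∀ k, pY n H₀ k z = -∑ p ∈ P, κ p.1 * κ p.2 *
      ((if k = p.1 then (z p.1 - z p.2).im else if k = p.2 then -(z p.1 - z p.2).im else 0)
        / Complex.normSq (z p.1 - z p.2)) := by
    intro k
    have key : HasDerivAt (fun s : ℝ => -∑ p ∈ P, κ p.1 * κ p.2 * Real.log (‖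
        (Function.update z k (⟨(z k).re, s⟩ : ℂ) p.1
          - Function.update z k (⟨(z k).re, s⟩ : ℂ) p.2)‖))
        (-∑ p ∈ P, κ p.1 * κ p.2 *
          ((if k = p.1 then (z p.1 - z p.2).im else if k = p.2 then -(z p.1 - z p.2).im else 0)
            / Complex.normSq (z p.1 - z p.2))) ((z k).im) :=
      (HasDerivAt.fun_sum fun p hp =>
        (pair_deriv_y z k p.1 p.2 (hpne p hp).1 (hpne p hp).2).const_mul
          (κ p.1 * κ p.2)).neg
    exact key.deriv
  have inner_x : ∀ p ∈ P, ∑ k, κ p.1 * κ p.2 *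
      ((if k = p.1 then (z p.1 - z p.2).re else if k = p.2 then -(z p.1 - z p.2).re else 0)
        / Complex.normSq (z p.1 - z p.2)) = 0 := by
    intro p hp
    rw [← Finset.mul_sum, ← Finset.sum_div, sum_if_pair (hpne p hp).1]
    simp
  have inner_y : ∀ p ∈ P, ∑ k, κ p.1 * κ p.2 *
      ((if k = p.1 then (z p.1 - z p.2).im else if k = p.2 then -(z p.1 - z p.2).im else 0)
        / Complex.normSq (z p.1 - z p.2)) = 0 := by
    intro p hp
    rw [← Finset.mul_sum, ← Finset.sum_div, sum_if_pair (hpne p hp).1]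
    simp
  have hSx : ∑ k, pX n H₀ k z = 0 := by
    calc ∑ k, pX n H₀ k z
        = ∑ k, -∑ p ∈ P, κ p.1 * κ p.2 *
          ((if k = p.1 then (z p.1 - z p.2).re else if k = p.2 then -(z p.1 - z p.2).re else 0)
            / Complex.normSq (z p.1 - z p.2)) := Finset.sum_congr rfl fun k _ => hHx k
      _ = -∑ k, ∑ p ∈ P, κ p.1 * κ p.2 *
          ((if k = p.1 then (z p.1 - z p.2).re else if k = p.2 then -(z p.1 - z p.2).re else 0)
            / Complex.normSq (z p.1 - z p.2)) := by rw [Finset.sum_neg_distrib]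
      _ = -∑ p ∈ P, ∑ k, κ p.1 * κ p.2 *
          ((if k = p.1 then (z p.1 - z p.2).re else if k = p.2 then -(z p.1 - z p.2).re else 0)
            / Complex.normSq (z p.1 - z p.2)) := by rw [Finset.sum_comm]
      _ = 0 := by rw [Finset.sum_eq_zero inner_x, neg_zero]
  have hSy : ∑ k, pY n H₀ k z = 0 := by
    calc ∑ k, pY n H₀ k z
        = ∑ k, -∑ p ∈ P, κ p.1 * κ p.2 *
          ((if k = p.1 then (z p.1 - z p.2).im else if k = p.2 then -(z p.1 - z p.2).im else 0)
            / Complex.normSq (z p.1 - z p.2)) := Finset.sum_congr rfl fun k _ => hHy k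
      _ = -∑ k, ∑ p ∈ P, κ p.1 * κ p.2 *
          ((if k = p.1 then (z p.1 - z p.2).im else if k = p.2 then -(z p.1 - z p.2).im else 0)
            / Complex.normSq (z p.1 - z p.2)) := by rw [Finset.sum_neg_distrib]
      _ = -∑ p ∈ P, ∑ k, κ p.1 * κ p.2 *
          ((if k = p.1 then (z p.1 - z p.2).im else if k = p.2 then -(z p.1 - z p.2).im else 0)
            / Complex.normSq (z p.1 - z p.2)) := by rw [Finset.sum_comm]
      _ = 0 := by rw [Finset.sum_eq_zero inner_y, neg_zero]
  -- assemble
  unfold pbracket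
  calc ∑ k, (κ k)⁻¹ * (pY n H₀ k z * pX n (fun w => (∑ m, κ m * (w m).re) ^ 2
          + (∑ m, κ m * (w m).im) ^ 2) k z
        - pX n H₀ k z * pY n (fun w => (∑ m, κ m * (w m).re) ^ 2
          + (∑ m, κ m * (w m).im) ^ 2) k z)
      = ∑ k, (2 * (∑ m, κ m * (z m).re) * pY n H₀ k z
        - 2 * (∑ m, κ m * (z m).im) * pX n H₀ k z) := by
        refine Finset.sum_congr rfl fun k _ => ?_
        rw [pXL, pYL]
        field_simp [hκ k]
    _ = 2 * (∑ m, κ m * (z m).re) * ∑ k, pY n H₀ k z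
        - 2 * (∑ m, κ m * (z m).im) * ∑ k, pX n H₀ k z := by
        rw [Finset.sum_sub_distrib, ← Finset.mul_sum, ← Finset.mul_sum]
    _ = 0 := by rw [hSx, hSy]; ring
end

section
/- For three vortices (n = 3), along every solution of the planar point-vortex system the quantity κ_1^{-1} log R_1 + κ_2^{-1} log R_2 + κ_3^{-1} log R_3 is constant in t, where R_1 = |z_2 − z_3|, R_2 = |z_1 − z_3|, R_3 = |z_1 − z_2| are the side lengths of the vortex triangle. -/
/-- The right-hand side of the planar point-vortex system, written as the complex
number ẋ_k + i ẏ_k with ẋ_k = Σ_{j≠k} κ_j (y_j − y_k)/|z_j − z_k|² and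
ẏ_k = −Σ_{j≠k} κ_j (x_j − x_k)/|z_j − z_k|². -/
noncomputable def vRHS (n : ℕ) (κ : Fin n → ℝ) (z : Fin n → ℂ) (k : Fin n) : ℂ :=
  ⟨∑ j ∈ Finset.univ.erase k, κ j * ((z j).im - (z k).im) / ‖z j - z k‖ ^ 2,
   -∑ j ∈ Finset.univ.erase k, κ j * ((z j).re - (z k).re) / ‖z j - z k‖ ^ 2⟩

lemma vRHS3_re (κ : Fin 3 → ℝ) (w : Fin 3 → ℂ) (k : Fin 3) :
    (vRHS 3 κ w k).re
      = ∑ j : Fin 3, κ j * ((w j).im - (w k).im) / ‖w j - w k‖ ^ 2 := by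
  have h : (vRHS 3 κ w k).re
      = ∑ j ∈ Finset.univ.erase k,
          κ j * ((w j).im - (w k).im) / ‖w j - w k‖ ^ 2 := rfl
  rw [h, ← Finset.sum_erase_add Finset.univ _ (Finset.mem_univ k)]
  simp

lemma vRHS3_im (κ : Fin 3 → ℝ) (w : Fin 3 → ℂ) (k : Fin 3) :
    (vRHS 3 κ w k).im
      = -∑ j : Fin 3, κ j * ((w j).re - (w k).re) / ‖w j - w k‖ ^ 2 := by
  have h : (vRHS 3 κ w k).im
      = -∑ j ∈ Finset.univ.erase k,
          κ j * ((w j).re - (w k).re) / ‖w j - w k‖ ^ 2 := rfl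
  rw [h, ← Finset.sum_erase_add Finset.univ _ (Finset.mem_univ k)]
  simp

set_option maxHeartbeats 1600000

/-- For three vortices, κ₁⁻¹ log R₁ + κ₂⁻¹ log R₂ + κ₃⁻¹ log R₃ is constant along
every solution, where R₁ = |z₂ − z₃|, R₂ = |z₁ − z₃|, R₃ = |z₁ − z₂|. -/
theorem trilinear_log_invariant (κ : Fin 3 → ℝ) (hκ : ∀ j, κ j ≠ 0)
    (z : Fin 3 → ℝ → ℂ)
    (hsep : ∀ t, ∀ j k, j ≠ k → z j t ≠ z k t)
    (hderiv : ∀ k t, HasDerivAt (z k) (vRHS 3 κ (fun j => z j t) k) t) :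
    ∀ t s,
      (κ 0)⁻¹ * Real.log (‖z 1 t - z 2 t‖) +
      (κ 1)⁻¹ * Real.log (‖z 0 t - z 2 t‖) +
      (κ 2)⁻¹ * Real.log (‖z 0 t - z 1 t‖) =
      (κ 0)⁻¹ * Real.log (‖z 1 s - z 2 s‖) +
      (κ 1)⁻¹ * Real.log (‖z 0 s - z 2 s‖) +
      (κ 2)⁻¹ * Real.log (‖z 0 s - z 1 s‖) := by
  intro t s
  have hne : ∀ (τ : ℝ) (p q : Fin 3), p ≠ q →
      ((z p τ).re - (z q τ).re) * ((z p τ).re - (z q τ).re) +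
      ((z p τ).im - (z q τ).im) * ((z p τ).im - (z q τ).im) ≠ 0 := by
    intro τ p q hpq
    have h0 : z p τ - z q τ ≠ 0 := sub_ne_zero.mpr (hsep τ p q hpq)
    have h1 : Complex.normSq (z p τ - z q τ) ≠ 0 := (Complex.normSq_pos.mpr h0).ne'
    simpa [Complex.normSq_apply, Complex.sub_re, Complex.sub_im] using h1
  have key : ∀ τ, HasDerivAt (fun u =>
      (κ 0)⁻¹ * Real.log (((z 1 u).re - (z 2 u).re) * ((z 1 u).re - (z 2 u).re) +
          ((z 1 u).im - (z 2 u).im) * ((z 1 u).im - (z 2 u).im)) +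
      (κ 1)⁻¹ * Real.log (((z 0 u).re - (z 2 u).re) * ((z 0 u).re - (z 2 u).re) +
          ((z 0 u).im - (z 2 u).im) * ((z 0 u).im - (z 2 u).im)) +
      (κ 2)⁻¹ * Real.log (((z 0 u).re - (z 1 u).re) * ((z 0 u).re - (z 1 u).re) +
          ((z 0 u).im - (z 1 u).im) * ((z 0 u).im - (z 1 u).im))) 0 τ := by
    intro τ
    have hre : ∀ k : Fin 3, HasDerivAt (fun u => (z k u).re)
        ((vRHS 3 κ (fun j => z j τ) k).re) τ := fun k => by
      simpa [Function.comp_def] using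
        Complex.reCLM.hasFDerivAt.comp_hasDerivAt τ (hderiv k τ)
    have him : ∀ k : Fin 3, HasDerivAt (fun u => (z k u).im)
        ((vRHS 3 κ (fun j => z j τ) k).im) τ := fun k => by
      simpa [Function.comp_def] using
        Complex.imCLM.hasFDerivAt.comp_hasDerivAt τ (hderiv k τ)
    have hre0 : HasDerivAt (fun u => (z 0 u).re)
        (κ 1 * ((z 1 τ).im - (z 0 τ).im) / (((z 0 τ).re - (z 1 τ).re) * ((z 0 τ).re - (z 1 τ).re) + ((z 0 τ).im - (z 1 τ).im) * ((z 0 τ).im - (z 1 τ).im)) + κ 2 * ((z 2 τ).im - (z 0 τ).im) / (((z 0 τ).re - (z 2 τ).re) * ((z 0 τ).re - (z 2 τ).re) + ((z 0 τ).im - (z 2 τ).im) * ((z 0 τ).im - (z 2 τ).im))) τ := by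
      convert hre 0 using 1
      rw [vRHS3_re, Fin.sum_univ_three]
      simp only [Complex.sq_norm, Complex.normSq_apply, Complex.sub_re, Complex.sub_im]
      ring
    have him0 : HasDerivAt (fun u => (z 0 u).im)
        (-(κ 1 * ((z 1 τ).re - (z 0 τ).re) / (((z 0 τ).re - (z 1 τ).re) * ((z 0 τ).re - (z 1 τ).re) + ((z 0 τ).im - (z 1 τ).im) * ((z 0 τ).im - (z 1 τ).im)) + κ 2 * ((z 2 τ).re - (z 0 τ).re) / (((z 0 τ).re - (z 2 τ).re) * ((z 0 τ).re - (z 2 τ).re) + ((z 0 τ).im - (z 2 τ).im) * ((z 0 τ).im - (z 2 τ).im)))) τ := by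
      convert him 0 using 1
      rw [vRHS3_im, Fin.sum_univ_three]
      simp only [Complex.sq_norm, Complex.normSq_apply, Complex.sub_re, Complex.sub_im]
      ring
    have hre1 : HasDerivAt (fun u => (z 1 u).re)
        (κ 0 * ((z 0 τ).im - (z 1 τ).im) / (((z 0 τ).re - (z 1 τ).re) * ((z 0 τ).re - (z 1 τ).re) + ((z 0 τ).im - (z 1 τ).im) * ((z 0 τ).im - (z 1 τ).im)) + κ 2 * ((z 2 τ).im - (z 1 τ).im) / (((z 1 τ).re - (z 2 τ).re) * ((z 1 τ).re - (z 2 τ).re) + ((z 1 τ).im - (z 2 τ).im) * ((z 1 τ).im - (z 2 τ).im))) τ := by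
      convert hre 1 using 1
      rw [vRHS3_re, Fin.sum_univ_three]
      simp only [Complex.sq_norm, Complex.normSq_apply, Complex.sub_re, Complex.sub_im]
      ring
    have him1 : HasDerivAt (fun u => (z 1 u).im)
        (-(κ 0 * ((z 0 τ).re - (z 1 τ).re) / (((z 0 τ).re - (z 1 τ).re) * ((z 0 τ).re - (z 1 τ).re) + ((z 0 τ).im - (z 1 τ).im) * ((z 0 τ).im - (z 1 τ).im)) + κ 2 * ((z 2 τ).re - (z 1 τ).re) / (((z 1 τ).re - (z 2 τ).re) * ((z 1 τ).re - (z 2 τ).re) + ((z 1 τ).im - (z 2 τ).im) * ((z 1 τ).im - (z 2 τ).im)))) τ := by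
      convert him 1 using 1
      rw [vRHS3_im, Fin.sum_univ_three]
      simp only [Complex.sq_norm, Complex.normSq_apply, Complex.sub_re, Complex.sub_im]
      ring
    have hre2 : HasDerivAt (fun u => (z 2 u).re)
        (κ 0 * ((z 0 τ).im - (z 2 τ).im) / (((z 0 τ).re - (z 2 τ).re) * ((z 0 τ).re - (z 2 τ).re) + ((z 0 τ).im - (z 2 τ).im) * ((z 0 τ).im - (z 2 τ).im)) + κ 1 * ((z 1 τ).im - (z 2 τ).im) / (((z 1 τ).re - (z 2 τ).re) * ((z 1 τ).re - (z 2 τ).re) + ((z 1 τ).im - (z 2 τ).im) * ((z 1 τ).im - (z 2 τ).im))) τ := by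
      convert hre 2 using 1
      rw [vRHS3_re, Fin.sum_univ_three]
      simp only [Complex.sq_norm, Complex.normSq_apply, Complex.sub_re, Complex.sub_im]
      ring
    have him2 : HasDerivAt (fun u => (z 2 u).im)
        (-(κ 0 * ((z 0 τ).re - (z 2 τ).re) / (((z 0 τ).re - (z 2 τ).re) * ((z 0 τ).re - (z 2 τ).re) + ((z 0 τ).im - (z 2 τ).im) * ((z 0 τ).im - (z 2 τ).im)) + κ 1 * ((z 1 τ).re - (z 2 τ).re) / (((z 1 τ).re - (z 2 τ).re) * ((z 1 τ).re - (z 2 τ).re) + ((z 1 τ).im - (z 2 τ).im) * ((z 1 τ).im - (z 2 τ).im)))) τ := by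
      convert him 2 using 1
      rw [vRHS3_im, Fin.sum_univ_three]
      simp only [Complex.sq_norm, Complex.normSq_apply, Complex.sub_re, Complex.sub_im]
      ring
    have hG12 := ((hre1.sub hre2).mul (hre1.sub hre2)).add
      ((him1.sub him2).mul (him1.sub him2))
    have hG02 := ((hre0.sub hre2).mul (hre0.sub hre2)).add
      ((him0.sub him2).mul (him0.sub him2))
    have hG01 := ((hre0.sub hre1).mul (hre0.sub hre1)).add
      ((him0.sub him1).mul (him0.sub him1))
    have hl12 := hG12.log (hne τ 1 2 (by decide))
    have hl02 := hG02.log (hne τ 0 2 (by decide))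
    have hl01 := hG01.log (hne τ 0 1 (by decide))
    simp only [Pi.add_apply, Pi.mul_apply, Pi.sub_apply] at hl12 hl02 hl01
    have hl12' : HasDerivAt (fun u =>
        Real.log (((z 1 u).re - (z 2 u).re) * ((z 1 u).re - (z 2 u).re) +
          ((z 1 u).im - (z 2 u).im) * ((z 1 u).im - (z 2 u).im)))
        (2 * κ 0 * (((z 0 τ).im - (z 1 τ).im) * ((z 1 τ).re - (z 2 τ).re) -
          ((z 0 τ).re - (z 1 τ).re) * ((z 1 τ).im - (z 2 τ).im)) * ((((z 0 τ).re - (z 2 τ).re) * ((z 0 τ).re - (z 2 τ).re) +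
          ((z 0 τ).im - (z 2 τ).im) * ((z 0 τ).im - (z 2 τ).im)) - (((z 0 τ).re - (z 1 τ).re) * ((z 0 τ).re - (z 1 τ).re) +
          ((z 0 τ).im - (z 1 τ).im) * ((z 0 τ).im - (z 1 τ).im))) / ((((z 0 τ).re - (z 1 τ).re) * ((z 0 τ).re - (z 1 τ).re) +
          ((z 0 τ).im - (z 1 τ).im) * ((z 0 τ).im - (z 1 τ).im)) * (((z 0 τ).re - (z 2 τ).re) * ((z 0 τ).re - (z 2 τ).re) +
          ((z 0 τ).im - (z 2 τ).im) * ((z 0 τ).im - (z 2 τ).im)) * (((z 1 τ).re - (z 2 τ).re) * ((z 1 τ).re - (z 2 τ).re) +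
          ((z 1 τ).im - (z 2 τ).im) * ((z 1 τ).im - (z 2 τ).im)))) τ := by
      convert hl12 using 1
      have h01 := hne τ 0 1 (by decide)
      have h02 := hne τ 0 2 (by decide)
      have h12 := hne τ 1 2 (by decide)
      set p : ℝ := ((z 0 τ).re - (z 1 τ).re) * ((z 0 τ).re - (z 1 τ).re) +
          ((z 0 τ).im - (z 1 τ).im) * ((z 0 τ).im - (z 1 τ).im) with hp
      set q : ℝ := ((z 0 τ).re - (z 2 τ).re) * ((z 0 τ).re - (z 2 τ).re) +
          ((z 0 τ).im - (z 2 τ).im) * ((z 0 τ).im - (z 2 τ).im) with hq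
      set r : ℝ := ((z 1 τ).re - (z 2 τ).re) * ((z 1 τ).re - (z 2 τ).re) +
          ((z 1 τ).im - (z 2 τ).im) * ((z 1 τ).im - (z 2 τ).im) with hr
      clear_value p q r
      field_simp [h01, h02, h12]
      ring
    have hl02' : HasDerivAt (fun u =>
        Real.log (((z 0 u).re - (z 2 u).re) * ((z 0 u).re - (z 2 u).re) +
          ((z 0 u).im - (z 2 u).im) * ((z 0 u).im - (z 2 u).im)))
        (2 * κ 1 * (((z 0 τ).im - (z 1 τ).im) * ((z 1 τ).re - (z 2 τ).re) -
          ((z 0 τ).re - (z 1 τ).re) * ((z 1 τ).im - (z 2 τ).im)) * ((((z 0 τ).re - (z 1 τ).re) * ((z 0 τ).re - (z 1 τ).re) +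
          ((z 0 τ).im - (z 1 τ).im) * ((z 0 τ).im - (z 1 τ).im)) - (((z 1 τ).re - (z 2 τ).re) * ((z 1 τ).re - (z 2 τ).re) +
          ((z 1 τ).im - (z 2 τ).im) * ((z 1 τ).im - (z 2 τ).im))) / ((((z 0 τ).re - (z 1 τ).re) * ((z 0 τ).re - (z 1 τ).re) +
          ((z 0 τ).im - (z 1 τ).im) * ((z 0 τ).im - (z 1 τ).im)) * (((z 0 τ).re - (z 2 τ).re) * ((z 0 τ).re - (z 2 τ).re) +
          ((z 0 τ).im - (z 2 τ).im) * ((z 0 τ).im - (z 2 τ).im)) * (((z 1 τ).re - (z 2 τ).re) * ((z 1 τ).re - (z 2 τ).re) +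
          ((z 1 τ).im - (z 2 τ).im) * ((z 1 τ).im - (z 2 τ).im)))) τ := by
      convert hl02 using 1
      have h01 := hne τ 0 1 (by decide)
      have h02 := hne τ 0 2 (by decide)
      have h12 := hne τ 1 2 (by decide)
      set p : ℝ := ((z 0 τ).re - (z 1 τ).re) * ((z 0 τ).re - (z 1 τ).re) +
          ((z 0 τ).im - (z 1 τ).im) * ((z 0 τ).im - (z 1 τ).im) with hp
      set q : ℝ := ((z 0 τ).re - (z 2 τ).re) * ((z 0 τ).re - (z 2 τ).re) +
          ((z 0 τ).im - (z 2 τ).im) * ((z 0 τ).im - (z 2 τ).im) with hq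
      set r : ℝ := ((z 1 τ).re - (z 2 τ).re) * ((z 1 τ).re - (z 2 τ).re) +
          ((z 1 τ).im - (z 2 τ).im) * ((z 1 τ).im - (z 2 τ).im) with hr
      clear_value p q r
      field_simp [h01, h02, h12]
      ring
    have hl01' : HasDerivAt (fun u =>
        Real.log (((z 0 u).re - (z 1 u).re) * ((z 0 u).re - (z 1 u).re) +
          ((z 0 u).im - (z 1 u).im) * ((z 0 u).im - (z 1 u).im)))
        (2 * κ 2 * (((z 0 τ).im - (z 1 τ).im) * ((z 1 τ).re - (z 2 τ).re) -
          ((z 0 τ).re - (z 1 τ).re) * ((z 1 τ).im - (z 2 τ).im)) * ((((z 1 τ).re - (z 2 τ).re) * ((z 1 τ).re - (z 2 τ).re) +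
          ((z 1 τ).im - (z 2 τ).im) * ((z 1 τ).im - (z 2 τ).im)) - (((z 0 τ).re - (z 2 τ).re) * ((z 0 τ).re - (z 2 τ).re) +
          ((z 0 τ).im - (z 2 τ).im) * ((z 0 τ).im - (z 2 τ).im))) / ((((z 0 τ).re - (z 1 τ).re) * ((z 0 τ).re - (z 1 τ).re) +
          ((z 0 τ).im - (z 1 τ).im) * ((z 0 τ).im - (z 1 τ).im)) * (((z 0 τ).re - (z 2 τ).re) * ((z 0 τ).re - (z 2 τ).re) +
          ((z 0 τ).im - (z 2 τ).im) * ((z 0 τ).im - (z 2 τ).im)) * (((z 1 τ).re - (z 2 τ).re) * ((z 1 τ).re - (z 2 τ).re) +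
          ((z 1 τ).im - (z 2 τ).im) * ((z 1 τ).im - (z 2 τ).im)))) τ := by
      convert hl01 using 1
      have h01 := hne τ 0 1 (by decide)
      have h02 := hne τ 0 2 (by decide)
      have h12 := hne τ 1 2 (by decide)
      set p : ℝ := ((z 0 τ).re - (z 1 τ).re) * ((z 0 τ).re - (z 1 τ).re) +
          ((z 0 τ).im - (z 1 τ).im) * ((z 0 τ).im - (z 1 τ).im) with hp
      set q : ℝ := ((z 0 τ).re - (z 2 τ).re) * ((z 0 τ).re - (z 2 τ).re) +
          ((z 0 τ).im - (z 2 τ).im) * ((z 0 τ).im - (z 2 τ).im) with hq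
      set r : ℝ := ((z 1 τ).re - (z 2 τ).re) * ((z 1 τ).re - (z 2 τ).re) +
          ((z 1 τ).im - (z 2 τ).im) * ((z 1 τ).im - (z 2 τ).im) with hr
      clear_value p q r
      field_simp [h01, h02, h12]
      ring
    have hF' := ((HasDerivAt.const_mul ((κ 0)⁻¹) hl12').add
        (HasDerivAt.const_mul ((κ 1)⁻¹) hl02')).add
        (HasDerivAt.const_mul ((κ 2)⁻¹) hl01')
    refine hF'.congr_deriv ?_
    rw [eq_comm]
    have h01 := hne τ 0 1 (by decide)
    have h02 := hne τ 0 2 (by decide)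
    have h12 := hne τ 1 2 (by decide)
    set p : ℝ := ((z 0 τ).re - (z 1 τ).re) * ((z 0 τ).re - (z 1 τ).re) +
        ((z 0 τ).im - (z 1 τ).im) * ((z 0 τ).im - (z 1 τ).im) with hp
    set q : ℝ := ((z 0 τ).re - (z 2 τ).re) * ((z 0 τ).re - (z 2 τ).re) +
        ((z 0 τ).im - (z 2 τ).im) * ((z 0 τ).im - (z 2 τ).im) with hq
    set r : ℝ := ((z 1 τ).re - (z 2 τ).re) * ((z 1 τ).re - (z 2 τ).re) +
        ((z 1 τ).im - (z 2 τ).im) * ((z 1 τ).im - (z 2 τ).im) with hr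
    clear_value p q r
    field_simp [hκ 0, hκ 1, hκ 2, h01, h02, h12]
    ring
  have hconst := is_const_of_deriv_eq_zero (f := fun u =>
      (κ 0)⁻¹ * Real.log (((z 1 u).re - (z 2 u).re) * ((z 1 u).re - (z 2 u).re) +
          ((z 1 u).im - (z 2 u).im) * ((z 1 u).im - (z 2 u).im)) +
      (κ 1)⁻¹ * Real.log (((z 0 u).re - (z 2 u).re) * ((z 0 u).re - (z 2 u).re) +
          ((z 0 u).im - (z 2 u).im) * ((z 0 u).im - (z 2 u).im)) +
      (κ 2)⁻¹ * Real.log (((z 0 u).re - (z 1 u).re) * ((z 0 u).re - (z 1 u).re) +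
          ((z 0 u).im - (z 1 u).im) * ((z 0 u).im - (z 1 u).im)))
    (fun x => (key x).differentiableAt) (fun x => (key x).deriv) t s
  have hlogeq : ∀ (i j : Fin 3) (u : ℝ),
      Real.log (‖z i u - z j u‖) =
        Real.log (((z i u).re - (z j u).re) * ((z i u).re - (z j u).re) +
          ((z i u).im - (z j u).im) * ((z i u).im - (z j u).im)) / 2 := by
    intro i j u
    have h2 : ((z i u).re - (z j u).re) * ((z i u).re - (z j u).re) +
        ((z i u).im - (z j u).im) * ((z i u).im - (z j u).im)
        = ‖z i u - z j u‖ ^ 2 := by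
      rw [Complex.sq_norm, Complex.normSq_apply, Complex.sub_re, Complex.sub_im]
    rw [h2, Real.log_pow]
    push_cast
    ring
  rw [hlogeq 1 2 t, hlogeq 0 2 t, hlogeq 0 1 t, hlogeq 1 2 s, hlogeq 0 2 s,
    hlogeq 0 1 s]
  linarith [hconst]
end

section
/- For three vortices (n = 3), along every solution of the planar point-vortex system the quantity κ_1^{-1} R_1² + κ_2^{-1} R_2² + κ_3^{-1} R_3² is constant in t, where R_1 = |z_2 − z_3|, R_2 = |z_1 − z_3|, R_3 = |z_1 − z_2| are the side lengths of the vortex triangle. -/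
lemma absSq_deriv {u v : ℝ → ℂ} {u' v' : ℂ} {t : ℝ}
    (hu : HasDerivAt u u' t) (hv : HasDerivAt v v' t) :
    HasDerivAt (fun s => ‖u s - v s‖ ^ 2)
      (2 * ((u t - v t).re * (u' - v').re + (u t - v t).im * (u' - v').im)) t := by
  have hw : HasDerivAt (fun s => u s - v s) (u' - v') t := hu.sub hv
  have hre : HasDerivAt (fun s => (u s - v s).re) ((u' - v').re) t :=
    Complex.reCLM.hasFDerivAt.comp_hasDerivAt t hw
  have him : HasDerivAt (fun s => (u s - v s).im) ((u' - v').im) t :=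
    Complex.imCLM.hasFDerivAt.comp_hasDerivAt t hw
  have h := ((hre.mul hre).add (him.mul him))
  have heq : (fun s => ‖u s - v s‖ ^ 2) =
      fun s => (u s - v s).re * (u s - v s).re + (u s - v s).im * (u s - v s).im := by
    funext s
    rw [Complex.sq_norm, Complex.normSq_apply]
  rw [heq]
  exact h.congr_deriv (by ring)

lemma vRHS_re0 (κ : Fin 3 → ℝ) (w : Fin 3 → ℂ) :
    (vRHS 3 κ w 0).re = κ 1 * ((w 1).im - (w 0).im) / Complex.normSq (w 1 - w 0)
      + κ 2 * ((w 2).im - (w 0).im) / Complex.normSq (w 2 - w 0) := by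
  simp [vRHS, Finset.sum_erase_eq_sub (Finset.mem_univ _), Fin.sum_univ_three,
    Complex.sq_norm]

lemma vRHS_im0 (κ : Fin 3 → ℝ) (w : Fin 3 → ℂ) :
    (vRHS 3 κ w 0).im = -(κ 1 * ((w 1).re - (w 0).re) / Complex.normSq (w 1 - w 0)
      + κ 2 * ((w 2).re - (w 0).re) / Complex.normSq (w 2 - w 0)) := by
  simp [vRHS, Finset.sum_erase_eq_sub (Finset.mem_univ _), Fin.sum_univ_three,
    Complex.sq_norm]

lemma vRHS_re1 (κ : Fin 3 → ℝ) (w : Fin 3 → ℂ) :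
    (vRHS 3 κ w 1).re = κ 0 * ((w 0).im - (w 1).im) / Complex.normSq (w 0 - w 1)
      + κ 2 * ((w 2).im - (w 1).im) / Complex.normSq (w 2 - w 1) := by
  simp [vRHS, Finset.sum_erase_eq_sub (Finset.mem_univ _), Fin.sum_univ_three,
    Complex.sq_norm]

lemma vRHS_im1 (κ : Fin 3 → ℝ) (w : Fin 3 → ℂ) :
    (vRHS 3 κ w 1).im = -(κ 0 * ((w 0).re - (w 1).re) / Complex.normSq (w 0 - w 1)
      + κ 2 * ((w 2).re - (w 1).re) / Complex.normSq (w 2 - w 1)) := by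
  simp [vRHS, Finset.sum_erase_eq_sub (Finset.mem_univ _), Fin.sum_univ_three,
    Complex.sq_norm]

lemma vRHS_re2 (κ : Fin 3 → ℝ) (w : Fin 3 → ℂ) :
    (vRHS 3 κ w 2).re = κ 0 * ((w 0).im - (w 2).im) / Complex.normSq (w 0 - w 2)
      + κ 1 * ((w 1).im - (w 2).im) / Complex.normSq (w 1 - w 2) := by
  simp [vRHS, Finset.sum_erase_eq_sub (Finset.mem_univ _), Fin.sum_univ_three,
    Complex.sq_norm]

lemma vRHS_im2 (κ : Fin 3 → ℝ) (w : Fin 3 → ℂ) :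
    (vRHS 3 κ w 2).im = -(κ 0 * ((w 0).re - (w 2).re) / Complex.normSq (w 0 - w 2)
      + κ 1 * ((w 1).re - (w 2).re) / Complex.normSq (w 1 - w 2)) := by
  simp [vRHS, Finset.sum_erase_eq_sub (Finset.mem_univ _), Fin.sum_univ_three,
    Complex.sq_norm]

set_option maxHeartbeats 1000000 in
lemma key_identity (k0 k1 k2 x0 y0 x1 y1 x2 y2 n01 n02 n12 : ℝ)
    (hk0 : k0 ≠ 0) (hk1 : k1 ≠ 0) (hk2 : k2 ≠ 0)
    (hn01 : n01 ≠ 0) (hn02 : n02 ≠ 0) (hn12 : n12 ≠ 0) :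
    (0 : ℝ) =
      k0⁻¹ * (2 * ((x1 - x2) *
          ((k0 * (y0 - y1) / n01 + k2 * (y2 - y1) / n12)
            - (k0 * (y0 - y2) / n02 + k1 * (y1 - y2) / n12)) +
        (y1 - y2) *
          (-(k0 * (x0 - x1) / n01 + k2 * (x2 - x1) / n12)
            - -(k0 * (x0 - x2) / n02 + k1 * (x1 - x2) / n12)))) +
      k1⁻¹ * (2 * ((x0 - x2) *
          ((k1 * (y1 - y0) / n01 + k2 * (y2 - y0) / n02)
            - (k0 * (y0 - y2) / n02 + k1 * (y1 - y2) / n12)) +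
        (y0 - y2) *
          (-(k1 * (x1 - x0) / n01 + k2 * (x2 - x0) / n02)
            - -(k0 * (x0 - x2) / n02 + k1 * (x1 - x2) / n12)))) +
      k2⁻¹ * (2 * ((x0 - x1) *
          ((k1 * (y1 - y0) / n01 + k2 * (y2 - y0) / n02)
            - (k0 * (y0 - y1) / n01 + k2 * (y2 - y1) / n12)) +
        (y0 - y1) *
          (-(k1 * (x1 - x0) / n01 + k2 * (x2 - x0) / n02)
            - -(k0 * (x0 - x1) / n01 + k2 * (x2 - x1) / n12)))) := by
  field_simp
  ring

/-- For three vortices, κ₁⁻¹ R₁² + κ₂⁻¹ R₂² + κ₃⁻¹ R₃² is constant along every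
solution, where R₁ = |z₂ − z₃|, R₂ = |z₁ − z₃|, R₃ = |z₁ − z₂|. -/
theorem trilinear_square_invariant (κ : Fin 3 → ℝ) (hκ : ∀ j, κ j ≠ 0)
    (z : Fin 3 → ℝ → ℂ)
    (hsep : ∀ t, ∀ j k, j ≠ k → z j t ≠ z k t)
    (hderiv : ∀ k t, HasDerivAt (z k) (vRHS 3 κ (fun j => z j t) k) t) :
    ∀ t s,
      (κ 0)⁻¹ * ‖z 1 t - z 2 t‖ ^ 2 +
      (κ 1)⁻¹ * ‖z 0 t - z 2 t‖ ^ 2 +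
      (κ 2)⁻¹ * ‖z 0 t - z 1 t‖ ^ 2 =
      (κ 0)⁻¹ * ‖z 1 s - z 2 s‖ ^ 2 +
      (κ 1)⁻¹ * ‖z 0 s - z 2 s‖ ^ 2 +
      (κ 2)⁻¹ * ‖z 0 s - z 1 s‖ ^ 2 := by
  have main : ∀ r, HasDerivAt (fun τ =>
      (κ 0)⁻¹ * ‖z 1 τ - z 2 τ‖ ^ 2 +
      (κ 1)⁻¹ * ‖z 0 τ - z 2 τ‖ ^ 2 +
      (κ 2)⁻¹ * ‖z 0 τ - z 1 τ‖ ^ 2) 0 r := by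
    intro r
    have h12 := (absSq_deriv (hderiv 1 r) (hderiv 2 r)).const_mul ((κ 0)⁻¹)
    have h02 := (absSq_deriv (hderiv 0 r) (hderiv 2 r)).const_mul ((κ 1)⁻¹)
    have h01 := (absSq_deriv (hderiv 0 r) (hderiv 1 r)).const_mul ((κ 2)⁻¹)
    have hF := (h12.add h02).add h01
    refine hF.congr_deriv (Eq.symm ?_)
    have hne : ∀ (j k : Fin 3), j ≠ k → Complex.normSq (z j r - z k r) ≠ 0 :=
      fun j k h => (Complex.normSq_pos.mpr (sub_ne_zero.mpr (hsep r j k h))).ne'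
    have hsw : ∀ (j k : Fin 3), Complex.normSq (z j r - z k r) = Complex.normSq (z k r - z j r) :=
      fun j k => by rw [← Complex.normSq_neg, neg_sub]
    simp only [Complex.sub_re, Complex.sub_im, vRHS_re0, vRHS_im0, vRHS_re1,
      vRHS_im1, vRHS_re2, vRHS_im2]
    rw [hsw 1 0, hsw 2 0, hsw 2 1]
    exact key_identity (κ 0) (κ 1) (κ 2) (z 0 r).re (z 0 r).im (z 1 r).re (z 1 r).im
      (z 2 r).re (z 2 r).im
      (Complex.normSq (z 0 r - z 1 r)) (Complex.normSq (z 0 r - z 2 r))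
      (Complex.normSq (z 1 r - z 2 r))
      (hκ 0) (hκ 1) (hκ 2)
      (hne 0 1 (by decide)) (hne 0 2 (by decide)) (hne 1 2 (by decide))
  exact fun t s => is_const_of_deriv_eq_zero
    (fun x => (main x).differentiableAt) (fun x => (main x).deriv) t s
end

section
/- Suppose κ_1, κ_2, κ_3 are nonzero reals with κ_1κ_2 + κ_1κ_3 + κ_2κ_3 = 0 (the parabolic case), and (x_1, x_2, x_3) are reals with x_1 + x_2 + x_3 = 1 and κ_1^{-1}x_1² + κ_2^{-1}x_2² + κ_3^{-1}x_3² = 0. Set S := κ_1 x_1(x_3² − x_2²) + κ_2 x_2(x_1² − x_3²) + κ_3 x_3(x_2² − x_1²). Then κ_1 x_1(x_3² − x_2²) = x_1·S, κ_2 x_2(x_1² − x_3²) = x_2·S, and κ_3 x_3(x_2² − x_1²) = x_3·S; consequently, every point of the curve C : κ_1^{-1}x_1² + κ_2^{-1}x_2² + κ_3^{-1}x_3² = 0 on the simplex is a stationary point of the trilinear three-vortex system. -/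
/-! Writing `aⱼ = κⱼ⁻¹`, the parabolic condition says `a₁ + a₂ + a₃ = 0`, and together with the
curve equation `a₁x₁² + a₂x₂² + a₃x₃² = 0` this forces the three numbers
`κ₁(x₃² − x₂²)`, `κ₂(x₁² − x₃²)`, `κ₃(x₂² − x₁²)` to coincide. Call the common value `q`;
then `S = q (x₁ + x₂ + x₃) = q`, so each component `κⱼxⱼ(⋯) = xⱼ q` equals `xⱼ S`. -/

section ParabolicCurve

variable {K : Type*} [Field K]

theorem inv_add_inv_add_inv_eq_zero_of_parabolic {κ₁ κ₂ κ₃ : K}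
    (hκ₁ : κ₁ ≠ 0) (hκ₂ : κ₂ ≠ 0) (hκ₃ : κ₃ ≠ 0)
    (hpar : κ₁ * κ₂ + κ₁ * κ₃ + κ₂ * κ₃ = 0) :
    κ₁⁻¹ + κ₂⁻¹ + κ₃⁻¹ = 0 := by
  field_simp
  linear_combination hpar

theorem mul_sq_sub_sq_eq_of_inv_sum_eq_zero {κ₁ κ₂ κ₃ x₁ x₂ x₃ : K}
    (hκ₁ : κ₁ ≠ 0) (hκ₂ : κ₂ ≠ 0) (hinv : κ₁⁻¹ + κ₂⁻¹ + κ₃⁻¹ = 0)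
    (hC : κ₁⁻¹ * x₁ ^ 2 + κ₂⁻¹ * x₂ ^ 2 + κ₃⁻¹ * x₃ ^ 2 = 0) :
    κ₁ * (x₃ ^ 2 - x₂ ^ 2) = κ₂ * (x₁ ^ 2 - x₃ ^ 2) := by
  linear_combination (norm := skip) (κ₁ * κ₂) * (x₃ ^ 2 * hinv - hC)
  field_simp
  ring

end ParabolicCurve

/-- In the parabolic case κ₁κ₂ + κ₁κ₃ + κ₂κ₃ = 0, every point of the curve
C : κ₁⁻¹x₁² + κ₂⁻¹x₂² + κ₃⁻¹x₃² = 0 on the simplex x₁ + x₂ + x₃ = 1 is a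
stationary point of the trilinear three-vortex system: each component
κ_j x_j (x_{j''}² − x_{j'}²) of the vector field equals x_j · S, so the
right-hand sides Λ{κ_j x_j(...) − x_j S} all vanish. -/
theorem parabolic_curve_stationary (κ₁ κ₂ κ₃ x₁ x₂ x₃ : ℝ)
    (hκ₁ : κ₁ ≠ 0) (hκ₂ : κ₂ ≠ 0) (hκ₃ : κ₃ ≠ 0)
    (hpar : κ₁ * κ₂ + κ₁ * κ₃ + κ₂ * κ₃ = 0)
    (hsum : x₁ + x₂ + x₃ = 1)
    (hC : κ₁⁻¹ * x₁ ^ 2 + κ₂⁻¹ * x₂ ^ 2 + κ₃⁻¹ * x₃ ^ 2 = 0) :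
    κ₁ * x₁ * (x₃ ^ 2 - x₂ ^ 2) =
      x₁ * (κ₁ * x₁ * (x₃ ^ 2 - x₂ ^ 2) + κ₂ * x₂ * (x₁ ^ 2 - x₃ ^ 2) +
        κ₃ * x₃ * (x₂ ^ 2 - x₁ ^ 2)) ∧
    κ₂ * x₂ * (x₁ ^ 2 - x₃ ^ 2) =
      x₂ * (κ₁ * x₁ * (x₃ ^ 2 - x₂ ^ 2) + κ₂ * x₂ * (x₁ ^ 2 - x₃ ^ 2) +
        κ₃ * x₃ * (x₂ ^ 2 - x₁ ^ 2)) ∧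
    κ₃ * x₃ * (x₂ ^ 2 - x₁ ^ 2) =
      x₃ * (κ₁ * x₁ * (x₃ ^ 2 - x₂ ^ 2) + κ₂ * x₂ * (x₁ ^ 2 - x₃ ^ 2) +
        κ₃ * x₃ * (x₂ ^ 2 - x₁ ^ 2)) := by
  have hinv := inv_add_inv_add_inv_eq_zero_of_parabolic hκ₁ hκ₂ hκ₃ hpar
  have h₁₂ := mul_sq_sub_sq_eq_of_inv_sum_eq_zero hκ₁ hκ₂ hinv hC
  have h₂₃ : κ₂ * (x₁ ^ 2 - x₃ ^ 2) = κ₃ * (x₂ ^ 2 - x₁ ^ 2) :=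
    mul_sq_sub_sq_eq_of_inv_sum_eq_zero (κ₃ := κ₁) hκ₂ hκ₃ (by linear_combination hinv)
      (by linear_combination hC)
  have hS : κ₁ * x₁ * (x₃ ^ 2 - x₂ ^ 2) + κ₂ * x₂ * (x₁ ^ 2 - x₃ ^ 2) +
      κ₃ * x₃ * (x₂ ^ 2 - x₁ ^ 2) = κ₁ * (x₃ ^ 2 - x₂ ^ 2) := by
    linear_combination (κ₁ * (x₃ ^ 2 - x₂ ^ 2)) * hsum - x₂ * h₁₂ - x₃ * (h₁₂ + h₂₃)
  rw [hS]
  exact ⟨by ring, by linear_combination -x₂ * h₁₂, by linear_combination -x₃ * (h₁₂ + h₂₃)⟩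
end

section
/- Let r_k(t) > 0 and y_k(t) (k = 1, 2, 3) be C¹ functions such that the squared radii s_k := r_k² satisfy the radial equations of the three coaxial slender vortex ring system: ds_k/dt = Σ_{j≠k} κ_j r_j r_k (s_j − s_k) ∫_0^{π/2} Δ_{jk}^{-3/2} cos 2α dα for k = 1, 2, 3, where Δ_{jk} := (r_k − r_j)² + (y_k − y_j)² + 4 r_j r_k sin²α. Then the quantity G = κ_1 r_1(t)² + κ_2 r_2(t)² + κ_3 r_3(t)² is constant in t. -/
open intervalIntegral

private lemma integral_sym (a b c d : ℝ) :
    (∫ α in (0:ℝ)..(Real.pi / 2),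
      ((a - b) ^ 2 + (c - d) ^ 2 + 4 * b * a * Real.sin α ^ 2) ^ (-(3:ℝ) / 2) *
        Real.cos (2 * α)) =
    ∫ α in (0:ℝ)..(Real.pi / 2),
      ((b - a) ^ 2 + (d - c) ^ 2 + 4 * a * b * Real.sin α ^ 2) ^ (-(3:ℝ) / 2) *
        Real.cos (2 * α) := by
  apply intervalIntegral.integral_congr
  intro α _
  dsimp only
  have h : (a - b) ^ 2 + (c - d) ^ 2 + 4 * b * a * Real.sin α ^ 2
      = (b - a) ^ 2 + (d - c) ^ 2 + 4 * a * b * Real.sin α ^ 2 := by ring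
  rw [h]

/-- Along every solution of the radial equations of the three coaxial slender
vortex ring system, G = κ₁ r₁² + κ₂ r₂² + κ₃ r₃² is constant in time. -/
theorem coaxial_rings_G_conserved (κ : Fin 3 → ℝ) (hκ : ∀ k, κ k ≠ 0)
    (r y : Fin 3 → ℝ → ℝ)
    (hr : ∀ k t, 0 < r k t)
    (hrC : ∀ k, ContDiff ℝ 1 (r k)) (hyC : ∀ k, ContDiff ℝ 1 (y k))
    (hderiv : ∀ k t, HasDerivAt (fun u => r k u ^ 2)
      (∑ j ∈ Finset.univ.erase k,
        κ j * r j t * r k t * (r j t ^ 2 - r k t ^ 2) *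
          ∫ α in (0:ℝ)..(Real.pi / 2),
            ((r k t - r j t) ^ 2 + (y k t - y j t) ^ 2 +
              4 * r j t * r k t * Real.sin α ^ 2) ^ (-(3:ℝ) / 2) *
            Real.cos (2 * α)) t) :
    ∀ t s, ∑ k, κ k * r k t ^ 2 = ∑ k, κ k * r k s ^ 2 := by
  set f : ℝ → ℝ := fun u => ∑ k, κ k * r k u ^ 2 with hf
  have key : ∀ t, HasDerivAt f 0 t := by
    intro t
    set T : Fin 3 → Fin 3 → ℝ := fun j k =>
      κ j * r j t * r k t * (r j t ^ 2 - r k t ^ 2) *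
        ∫ α in (0:ℝ)..(Real.pi / 2),
          ((r k t - r j t) ^ 2 + (y k t - y j t) ^ 2 +
            4 * r j t * r k t * Real.sin α ^ 2) ^ (-(3:ℝ) / 2) *
          Real.cos (2 * α) with hT
    have hd : ∀ k, HasDerivAt (fun u => r k u ^ 2)
        (∑ j ∈ Finset.univ.erase k, T j k) t := fun k => hderiv k t
    have hsum : HasDerivAt f
        (κ 0 * (∑ j ∈ Finset.univ.erase 0, T j 0)
          + κ 1 * (∑ j ∈ Finset.univ.erase 1, T j 1)
          + κ 2 * (∑ j ∈ Finset.univ.erase 2, T j 2)) t := by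
      have := (((hd 0).const_mul (κ 0)).add ((hd 1).const_mul (κ 1))).add
        ((hd 2).const_mul (κ 2))
      have hfe : f = (((fun y => κ 0 * r 0 y ^ 2) + fun y => κ 1 * r 1 y ^ 2) + fun y => κ 2 * r 2 y ^ 2) := by
        funext u
        simp [hf, Fin.sum_univ_three]
      rw [hfe]
      exact this
    have h0 : (Finset.univ.erase (0 : Fin 3)) = {1, 2} := by decide
    have h1 : (Finset.univ.erase (1 : Fin 3)) = {0, 2} := by decide
    have h2 : (Finset.univ.erase (2 : Fin 3)) = {0, 1} := by decide
    have hzero : κ 0 * (∑ j ∈ Finset.univ.erase 0, T j 0)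
          + κ 1 * (∑ j ∈ Finset.univ.erase 1, T j 1)
          + κ 2 * (∑ j ∈ Finset.univ.erase 2, T j 2) = 0 := by
      rw [h0, h1, h2]
      have e01 := integral_sym (r 0 t) (r 1 t) (y 0 t) (y 1 t)
      have e02 := integral_sym (r 0 t) (r 2 t) (y 0 t) (y 2 t)
      have e12 := integral_sym (r 1 t) (r 2 t) (y 1 t) (y 2 t)
      rw [Finset.sum_pair (by decide : (1:Fin 3) ≠ 2),
        Finset.sum_pair (by decide : (0:Fin 3) ≠ 2),
        Finset.sum_pair (by decide : (0:Fin 3) ≠ 1)]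
      simp only [hT]
      rw [e01, e02, e12]
      ring
    rw [hzero] at hsum
    exact hsum
  intro t s
  have hdf : Differentiable ℝ f := fun x => (key x).differentiableAt
  have hc := is_const_of_deriv_eq_zero hdf (fun x => (key x).deriv) t s
  simpa [hf] using hc
end

section
/- Let c ∈ ℂ, a ∈ ℂ with a ≠ 0, κ ≠ 0 a real number, σ ∈ ℝ, ζ := e^{2πi/3}, and ω := (κ + σ)/|a|². Then the functions z_k(t) := c + e^{iωt} ζ^k a for k = 1, 2, 3 and z_4(t) := c constitute a solution of the planar four-vortex system with strengths (κ_1, κ_2, κ_3, κ_4) = (κ, κ, κ, σ): three equal vortices at the vertices of an equilateral triangle rotate rigidly about their center of vorticity while a fourth vortex of arbitrary strength placed at the center remains fixed, with the three principal vortices traversing the same circle for every value of σ. -/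
open Complex Finset

/-- Key algebraic identity for the rotating vertices. -/
private lemma vortex_key (E a ζ w : ℂ) (ω κ σ : ℝ) (hE : E ≠ 0) (ha : a ≠ 0)
    (hcE : (starRingEnd ℂ) E = E⁻¹) (hcz : (starRingEnd ℂ) ζ = ζ^2)
    (hcw : (starRingEnd ℂ) w = w^2)
    (hz3 : ζ^3 = 1) (hw3 : w^3 = 1) (hsum : ζ^2 + ζ + 1 = 0)
    (hA : (starRingEnd ℂ) a * a = ((‖a‖^2 : ℝ) : ℂ))
    (hωA : (ω:ℂ) * ((‖a‖^2 : ℝ) : ℂ) = (κ:ℂ) + (σ:ℂ)) :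
    Complex.I * (ω:ℂ) * E * w * a =
      (starRingEnd ℂ) (Complex.I * ((κ:ℂ) * (E * a * (w * ζ - w))⁻¹ +
        ((κ:ℂ) * (E * a * (w * ζ^2 - w))⁻¹ + (σ:ℂ) * (-(E * w * a))⁻¹))) := by
  have hca : (starRingEnd ℂ) a ≠ 0 := by simpa using ha
  have i1 : (E * a * (w * ζ - w))⁻¹ = E⁻¹ * a⁻¹ * ((w^2*ζ^2 - w^2)/3) := by
    rw [inv_eq_of_mul_eq_one_right]
    field_simp
    linear_combination (1-ζ-ζ^2+ζ^3)*hw3 + hz3 - hsum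
  have i2 : (E * a * (w * ζ^2 - w))⁻¹ = E⁻¹ * a⁻¹ * ((w^2*ζ - w^2)/3) := by
    rw [inv_eq_of_mul_eq_one_right]
    field_simp
    linear_combination (1-ζ-ζ^2+ζ^3)*hw3 + hz3 - hsum
  have i3 : (-(E * w * a))⁻¹ = -(E⁻¹ * w^2 * a⁻¹) := by
    rw [inv_eq_of_mul_eq_one_right]
    field_simp
    linear_combination hw3
  rw [i1, i2, i3]
  simp only [map_mul, map_add, map_inv₀, map_sub, map_neg, map_one, map_pow,
    map_div₀, map_ofNat, Complex.conj_I, Complex.conj_ofReal, hcE, hcz, hcw, inv_inv]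
  field_simp
  linear_combination (3*(ω:ℂ)*w)*hA + (3*w)*hωA +
    (w*((κ:ℂ)*(ζ^4+ζ^2-2)-3*(σ:ℂ)))*hw3 + (w*(κ:ℂ)*ζ)*hz3 + (w*(κ:ℂ))*hsum

/-- Three equal vortices of strength κ at the vertices of an equilateral triangle
(vertices c + ζ^k a, ζ = e^{2πi/3}) rotate rigidly with angular velocity
ω = (κ + σ)/|a|² about a fourth vortex of arbitrary strength σ fixed at the
center c: the resulting four trajectories solve the planar four-vortex system
dz̄_k/dt = i Σ_{j≠k} κ_j (z_j − z_k)⁻¹ with strengths (κ, κ, κ, σ), with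
pairwise distinct positions for all time, and the three principal vortices
traverse the same circle for every value of σ. -/
theorem restricted_four_vortex_solution (c a : ℂ) (ha : a ≠ 0) (κ σ : ℝ)
    (hκ : κ ≠ 0)
    (ζ : ℂ) (hζ : ζ = Complex.exp (2 * (Real.pi : ℂ) * Complex.I / 3))
    (ω : ℝ) (hω : ω = (κ + σ) / ‖a‖ ^ 2)
    (z : Fin 4 → ℝ → ℂ)
    (hz : ∀ (k : Fin 4) (t : ℝ), z k t =
      if (k : ℕ) < 3 then
        c + Complex.exp (Complex.I * ((ω : ℂ) * (t : ℂ))) * ζ ^ ((k : ℕ) + 1) * a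
      else c)
    (κv : Fin 4 → ℝ) (hκv : κv = ![κ, κ, κ, σ]) :
    (∀ t, ∀ j k : Fin 4, j ≠ k → z j t ≠ z k t) ∧
    (∀ (k : Fin 4) (t : ℝ), HasDerivAt (z k)
      (starRingEnd ℂ
        (Complex.I * ∑ j ∈ Finset.univ.erase k, (κv j : ℂ) * (z j t - z k t)⁻¹)) t) ∧
    (∀ j : Fin 4, (j : ℕ) < 3 → ∀ t, ‖z j t - c‖ = ‖a‖) := by
  -- basic facts about ζ
  have hprim : IsPrimitiveRoot ζ 3 := by
    have h := Complex.isPrimitiveRoot_exp 3 (by norm_num)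
    rw [hζ]; convert h using 2; norm_num
  have hz3 : ζ ^ 3 = 1 := hprim.pow_eq_one
  have hz0 : ζ ≠ 0 := by rw [hζ]; exact Complex.exp_ne_zero _
  have h1 : ζ ≠ 1 := hprim.ne_one (by norm_num)
  have h2 : ζ ^ 2 ≠ 1 := hprim.pow_ne_one_of_pos_of_lt (by norm_num) (by norm_num)
  have hsum : ζ ^ 2 + ζ + 1 = 0 := by
    rcases mul_eq_zero.mp (show (ζ - 1) * (ζ^2 + ζ + 1) = 0 by linear_combination hz3) with h | h
    · exact absurd (sub_eq_zero.mp h) h1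
    · exact h
  have hcz : (starRingEnd ℂ) ζ = ζ ^ 2 := by
    have : (starRingEnd ℂ) ζ = ζ⁻¹ := by
      rw [hζ, ← Complex.exp_conj, ← Complex.exp_neg]
      congr 1
      simp only [map_div₀, map_mul, Complex.conj_I, Complex.conj_ofReal, map_ofNat]
      ring
    rw [this, inv_eq_of_mul_eq_one_right]
    linear_combination hz3
  have habsζ : ‖ζ‖ = 1 := by
    have h3 : ‖ζ‖ ^ 3 = 1 := by rw [← norm_pow, hz3, norm_one]
    nlinarith [norm_nonneg ζ, sq_nonneg (‖ζ‖ - 1), sq_nonneg (‖ζ‖ + 1)]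
  -- facts about E t = exp(I ω t)
  have hE : ∀ t : ℝ, Complex.exp (Complex.I * ((ω:ℂ) * (t:ℂ))) ≠ 0 :=
    fun t => Complex.exp_ne_zero _
  have hcE : ∀ t : ℝ, (starRingEnd ℂ) (Complex.exp (Complex.I * ((ω:ℂ) * (t:ℂ)))) =
      (Complex.exp (Complex.I * ((ω:ℂ) * (t:ℂ))))⁻¹ := by
    intro t
    rw [← Complex.exp_conj, ← Complex.exp_neg]
    congr 1
    simp only [map_mul, Complex.conj_I, Complex.conj_ofReal]
    ring
  have habsE : ∀ t : ℝ, ‖Complex.exp (Complex.I * ((ω:ℂ) * (t:ℂ)))‖ = 1 := by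
    intro t
    rw [Complex.norm_exp]
    norm_num [Complex.mul_re]
  have hA : (starRingEnd ℂ) a * a = ((‖a‖^2 : ℝ) : ℂ) := by
    rw [mul_comm, Complex.mul_conj, Complex.sq_norm]
  have hωA : (ω:ℂ) * ((‖a‖^2 : ℝ) : ℂ) = (κ:ℂ) + (σ:ℂ) := by
    have ha' : ‖a‖ ≠ 0 := norm_ne_zero_iff.mpr ha
    have : ω * ‖a‖^2 = κ + σ := by
      rw [hω]; field_simp
    exact_mod_cast congrArg (Complex.ofReal) this
  -- derivatives of the trajectories
  have hD : ∀ (m : ℕ) (t : ℝ), HasDerivAt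
      (fun s : ℝ => c + Complex.exp (Complex.I * ((ω:ℂ) * (s:ℂ))) * ζ ^ m * a)
      (Complex.I * (ω:ℂ) * Complex.exp (Complex.I * ((ω:ℂ) * (t:ℂ))) * ζ ^ m * a) t := by
    intro m t
    have hinner : HasDerivAt (fun y : ℂ => Complex.I * ((ω:ℂ) * y)) (Complex.I * (ω:ℂ)) (t:ℂ) := by
      simpa [mul_assoc] using (hasDerivAt_id (t:ℂ)).const_mul (Complex.I * (ω:ℂ))
    have hexp := hinner.cexp
    have h := (((hexp.mul_const (ζ ^ m)).mul_const a).const_add c).comp_ofReal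
    convert h using 1
    ring
  refine ⟨?_, ?_, ?_⟩
  · -- distinctness
    intro t j k hjk
    have hne : ∀ u v : ℂ, u ≠ v →
        c + Complex.exp (Complex.I * ((ω:ℂ) * (t:ℂ))) * u * a ≠
        c + Complex.exp (Complex.I * ((ω:ℂ) * (t:ℂ))) * v * a := by
      intro u v huv h
      have h' : Complex.exp (Complex.I * ((ω:ℂ) * (t:ℂ))) * u * a =
          Complex.exp (Complex.I * ((ω:ℂ) * (t:ℂ))) * v * a := by linear_combination h
      exact huv (mul_left_cancel₀ (hE t) (mul_right_cancel₀ ha h'))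
    have hne0 : ∀ u : ℂ, u ≠ 0 →
        c + Complex.exp (Complex.I * ((ω:ℂ) * (t:ℂ))) * u * a ≠ c := by
      intro u hu h
      exact (mul_ne_zero (mul_ne_zero (hE t) hu) ha) (by linear_combination h)
    have f12 : ζ ≠ ζ ^ 2 := by
      intro h
      exact h1 (mul_left_cancel₀ hz0 (show ζ * 1 = ζ * ζ by linear_combination h)).symm
    have f13 : ζ ≠ ζ ^ 3 := by rw [hz3]; exact h1
    have f23 : ζ ^ 2 ≠ ζ ^ 3 := by rw [hz3]; exact h2
    have fz2 : ζ ^ 2 ≠ 0 := pow_ne_zero _ hz0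
    have fz3 : ζ ^ 3 ≠ 0 := pow_ne_zero _ hz0
    fin_cases j <;> fin_cases k <;>
      first
        | exact absurd rfl hjk
        | (rw [hz, hz]; norm_num;
           first
             | exact hne _ _ f12
             | exact hne _ _ f12.symm
             | exact hne _ _ f13
             | exact hne _ _ f13.symm
             | exact hne _ _ f23
             | exact hne _ _ f23.symm
             | exact hne0 _ hz0
             | exact hne0 _ fz2
             | exact hne0 _ fz3
             | exact (hne0 _ hz0).symm
             | exact (hne0 _ fz2).symm
             | exact (hne0 _ fz3).symm
             | exact ⟨by first
                 | exact f12 | exact f12.symm | exact f13 | exact f13.symm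
                 | exact f23 | exact f23.symm | exact hz0 | exact fz2 | exact fz3, ha⟩)
  · -- the ODE
    intro k t
    set E : ℂ := Complex.exp (Complex.I * ((ω:ℂ) * (t:ℂ))) with hEdef
    have k0 : κv 0 = κ := by simp [hκv]
    have k1 : κv 1 = κ := by simp [hκv]
    have k2 : κv 2 = κ := by simp [hκv]
    have k3 : κv 3 = σ := by simp [hκv]
    fin_cases k
    · -- k = 0, w = ζ
      have hzk : z ⟨0, by norm_num⟩ =
          fun s : ℝ => c + Complex.exp (Complex.I * ((ω:ℂ) * (s:ℂ))) * ζ ^ 1 * a :=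
        funext fun s => by rw [hz]; norm_num
      have hd : HasDerivAt (z ⟨0, by norm_num⟩)
          (Complex.I * (ω:ℂ) * E * ζ ^ 1 * a) t := by rw [hzk]; exact hD 1 t
      beta_reduce
      convert hd using 1
      rw [show (Finset.univ.erase ((⟨0, by norm_num⟩ : Fin 4))) = {1, 2, 3} from by decide,
        Finset.sum_insert (by decide), Finset.sum_insert (by decide), Finset.sum_singleton]
      have d1 : z 1 t - z ⟨0, by norm_num⟩ t = E * a * (ζ^1 * ζ - ζ^1) := by
        rw [hz, hz]; norm_num; ring
      have d2 : z 2 t - z ⟨0, by norm_num⟩ t = E * a * (ζ^1 * ζ^2 - ζ^1) := by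
        rw [hz, hz]; norm_num; ring
      have d3 : z 3 t - z ⟨0, by norm_num⟩ t = -(E * ζ^1 * a) := by
        rw [hz, hz]; norm_num [show ((3:Fin 4):ℕ) = 3 from rfl]; try ring
        exact Or.inl (Or.inl (by rw [hEdef, mul_assoc]))
      rw [d1, d2, d3, k1, k2, k3]
      exact (vortex_key E a ζ (ζ^1) ω κ σ (hE t) ha (hcE t) hcz
        (by rw [pow_one, hcz]) hz3 (by rw [pow_one]; exact hz3) hsum hA hωA).symm
    · -- k = 1, w = ζ²
      have hzk : z ⟨1, by norm_num⟩ =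
          fun s : ℝ => c + Complex.exp (Complex.I * ((ω:ℂ) * (s:ℂ))) * ζ ^ 2 * a :=
        funext fun s => by rw [hz]; norm_num
      have hd : HasDerivAt (z ⟨1, by norm_num⟩)
          (Complex.I * (ω:ℂ) * E * ζ ^ 2 * a) t := by rw [hzk]; exact hD 2 t
      beta_reduce
      convert hd using 1
      rw [show (Finset.univ.erase ((⟨1, by norm_num⟩ : Fin 4))) = {2, 0, 3} from by decide,
        Finset.sum_insert (by decide), Finset.sum_insert (by decide), Finset.sum_singleton]
      have d1 : z 2 t - z ⟨1, by norm_num⟩ t = E * a * (ζ^2 * ζ - ζ^2) := by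
        rw [hz, hz]; norm_num; ring
      have d2 : z 0 t - z ⟨1, by norm_num⟩ t = E * a * (ζ^2 * ζ^2 - ζ^2) := by
        rw [hz, hz]; norm_num
        linear_combination (-(Complex.exp (Complex.I * ((ω:ℂ) * (t:ℂ))) * a * ζ)) * hz3
      have d3 : z 3 t - z ⟨1, by norm_num⟩ t = -(E * ζ^2 * a) := by
        rw [hz, hz]; norm_num [show ((3:Fin 4):ℕ) = 3 from rfl]; try ring
        exact Or.inl (Or.inl (by rw [hEdef, mul_assoc]))
      rw [d1, d2, d3, k2, k0, k3]
      exact (vortex_key E a ζ (ζ^2) ω κ σ (hE t) ha (hcE t) hcz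
        (by rw [map_pow, hcz]; try ring) hz3 (by linear_combination (ζ^3+1)*hz3) hsum hA hωA).symm
    · -- k = 2, w = ζ³
      have hzk : z ⟨2, by norm_num⟩ =
          fun s : ℝ => c + Complex.exp (Complex.I * ((ω:ℂ) * (s:ℂ))) * ζ ^ 3 * a :=
        funext fun s => by rw [hz]; norm_num
      have hd : HasDerivAt (z ⟨2, by norm_num⟩)
          (Complex.I * (ω:ℂ) * E * ζ ^ 3 * a) t := by rw [hzk]; exact hD 3 t
      beta_reduce
      convert hd using 1
      rw [show (Finset.univ.erase ((⟨2, by norm_num⟩ : Fin 4))) = {0, 1, 3} from by decide,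
        Finset.sum_insert (by decide), Finset.sum_insert (by decide), Finset.sum_singleton]
      have d1 : z 0 t - z ⟨2, by norm_num⟩ t = E * a * (ζ^3 * ζ - ζ^3) := by
        rw [hz, hz]; norm_num
        linear_combination (-(Complex.exp (Complex.I * ((ω:ℂ) * (t:ℂ))) * a * ζ)) * hz3
      have d2 : z 1 t - z ⟨2, by norm_num⟩ t = E * a * (ζ^3 * ζ^2 - ζ^3) := by
        rw [hz, hz]; norm_num
        linear_combination (-(Complex.exp (Complex.I * ((ω:ℂ) * (t:ℂ))) * a * ζ^2)) * hz3
      have d3 : z 3 t - z ⟨2, by norm_num⟩ t = -(E * ζ^3 * a) := by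
        rw [hz, hz]; norm_num [show ((3:Fin 4):ℕ) = 3 from rfl]; try ring
        exact Or.inl (Or.inl (by rw [hEdef, mul_assoc]))
      rw [d1, d2, d3, k0, k1, k3]
      exact (vortex_key E a ζ (ζ^3) ω κ σ (hE t) ha (hcE t) hcz
        (by rw [map_pow, hcz]; ring) hz3 (by linear_combination (ζ^6+ζ^3+1)*hz3) hsum hA hωA).symm
    · -- k = 3, center vortex
      have hzk : z ⟨3, by norm_num⟩ = fun _ : ℝ => c := funext fun s => by rw [hz]; norm_num
      have hd : HasDerivAt (z ⟨3, by norm_num⟩) 0 t := by rw [hzk]; exact hasDerivAt_const t c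
      beta_reduce
      convert hd using 1
      rw [show (Finset.univ.erase ((⟨3, by norm_num⟩ : Fin 4))) = {0, 1, 2} from by decide,
        Finset.sum_insert (by decide), Finset.sum_insert (by decide), Finset.sum_singleton]
      have d1 : z 0 t - z ⟨3, by norm_num⟩ t = E * ζ^1 * a := by
        rw [hz, hz]; norm_num [show ((3:Fin 4):ℕ) = 3 from rfl]; try ring
        exact Or.inl (Or.inl (by rw [hEdef, mul_assoc]))
      have d2 : z 1 t - z ⟨3, by norm_num⟩ t = E * ζ^2 * a := by
        rw [hz, hz]; norm_num [show ((3:Fin 4):ℕ) = 3 from rfl]; try ring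
        exact Or.inl (Or.inl (by rw [hEdef, mul_assoc]))
      have d3 : z 2 t - z ⟨3, by norm_num⟩ t = E * ζ^3 * a := by
        rw [hz, hz]; norm_num [show ((3:Fin 4):ℕ) = 3 from rfl]; try ring
        exact Or.inl (Or.inl (by rw [hEdef, mul_assoc]))
      rw [d1, d2, d3, k0, k1, k2]
      have hzero : Complex.I * ((κ:ℂ) * (E * ζ^1 * a)⁻¹ +
          ((κ:ℂ) * (E * ζ^2 * a)⁻¹ + (κ:ℂ) * (E * ζ^3 * a)⁻¹)) = 0 := by
        have hE' : E ≠ 0 := hE t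
        field_simp [hE', hz0, ha]
        linear_combination (Complex.I*(κ:ℂ))*hsum
      rw [hzero, map_zero]
  · -- circle
    intro j hj t
    rw [hz]
    simp only [hj, if_pos]
    rw [add_sub_cancel_left, norm_mul, norm_mul, habsE, norm_pow, habsζ]
    simp
end
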